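/- arXiv:2407.13661 — 4 statements merged into one kernel-verified Lean document; each statement's English description precedes it below -/
import Mathlib

section
/- The candidate-removal safety condition guarantees eliminations in every order: let R be a set of candidates and G = C \ R. Suppose for every c ∈ R, (strict-support of c within R, i.e., the votes c holds after all of R \ {c} is eliminated and transferred) + B < (the minimum over g ∈ G of g's first-choice votes plus transfers from any subset of R \ {c}), and all these totals are below the quota Q. Then for every elimination order of R and any addition of at most B votes, at each step the candidate with the fewest active votes among remaining candidates lies in R; hence all of R is eliminated before any candidate in G. -/
/-- Candidate-removal safety: let `R, G` partition the candidates `Cand`, let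
`v E c` be `c`'s active votes when the set `E` of candidates is eliminated
(already incorporating up to `B` added votes), `s c` an upper bound on the
active votes of `c ∈ R` for any eliminated `E ⊆ R` not containing `c`, and
`mg g c` a lower bound on the active votes of `g ∈ G` for eliminated sets
`E ⊆ R \ {c}`. If `s c + B < mg g c < Q` for all `c ∈ R`, `g ∈ G`, then for
every eliminated set `E ⊆ R`, every remaining member of `R` has strictly fewer
active votes than every member of `G`; hence all of `R` is eliminated before
any candidate in `G`. -/
theorem candidate_removal_safety {C : Type*} [DecidableEq C]
    (Cand R G : Finset C) (hRC : R ⊆ Cand) (hG : G = Cand \ R)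
    (v : Finset C → C → ℝ) (s : C → ℝ) (mg : C → C → ℝ) (B Q : ℝ) (hB : 0 ≤ B)
    (hs : ∀ c ∈ R, ∀ E ⊆ R, c ∉ E → v E c ≤ s c + B)
    (hm : ∀ g ∈ G, ∀ c ∈ R, ∀ E ⊆ R.erase c, mg g c ≤ v E g)
    (hlt : ∀ c ∈ R, ∀ g ∈ G, s c + B < mg g c ∧ mg g c < Q) :
    ∀ E ⊆ R, ∀ c ∈ R, c ∉ E → ∀ g ∈ G, v E c < v E g := by
  intro E hE c hc hcE g hg
  have hE' : E ⊆ R.erase c := fun x hx => Finset.mem_erase.2 ⟨fun h => hcE (h ▸ hx), hE hx⟩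
  calc v E c ≤ s c + B := hs c hc E hE hcE
    _ < mg g c := (hlt c hc g hg).1
    _ ≤ v E g := hm g hg c hc E hE'
end

section
/- Under Assumption that a candidate can only alter a voter's ranking strictly below that candidate's own position on the ballot, an individual candidate cannot benefit from strategic voting: their own active vote total in every round before their elimination or win is unchanged by any modification of rankings placed after their own position on ballots. -/
/-- If a ballot modification only changes entries strictly after candidate `c`'s
own position on the ballot, then for any eliminated set `E` not containing `c`,
whether the ballot counts for `c` (i.e. `c` is the first listed candidate
outside `E`) is unchanged; hence `c`'s round-by-round totals before `c` leaves
the contest are invariant under such strategic voting. -/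
theorem no_self_benefit_below_own_position {C : Type*} [DecidableEq C]
    (c : C) (p s s' : List C) (hp : c ∉ p)
    (b b' : List C) (hb : b = p ++ c :: s) (hb' : b' = p ++ c :: s')
    (E : Finset C) (hE : c ∉ E) :
    (b.find? (fun x => decide (x ∉ E)) = some c ↔
      b'.find? (fun x => decide (x ∉ E)) = some c) := by
  subst hb hb'
  have key : ∀ t : List C, ((p ++ c :: t).find? (fun x => decide (x ∉ E)) = some c
      ↔ p.find? (fun x => decide (x ∉ E)) = none) := by
    intro t
    rw [List.find?_append]
    rcases h : p.find? (fun x => decide (x ∉ E)) with _ | d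
    · simp [List.find?_cons, hE]
    · have hd : d ∈ p := List.mem_of_find?_eq_some h
      have : d ≠ c := fun h' => hp (h' ▸ hd)
      simp [this]
  rw [key s, key s']
end

section
/- In a coalition of m ≥ 1 candidates using strategic voting restricted to positions after their own on each ballot, the first coalition member to leave the contest (by win or elimination) receives no benefit: their active vote totals in every round up to their departure are identical to the totals without the coalition's strategic changes. -/
/-- Coalition strategic voting restricted to positions after a coalition
member's own position: as long as no member of the coalition `K` has left the
contest (the eliminated set `E` is disjoint from `K`), the active vote total of
the first departing member `c₁ ∈ K` is identical with and without the
coalition's ballot modifications. -/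
theorem first_coalition_leaver_no_benefit {C : Type*} [DecidableEq C]
    {ι : Type*} (K : Finset C) (c₁ : C) (hc₁ : c₁ ∈ K)
    (ballots : Finset ι) (w : ι → ℝ) (ballot ballot' : ι → List C)
    (hmod : ∀ i ∈ ballots, ballot' i = ballot i ∨
      ∃ p k s s', k ∈ K ∧ (∀ x ∈ p, x ∉ K) ∧
        ballot i = p ++ k :: s ∧ ballot' i = p ++ k :: s')
    (E : Finset C) (hE : ∀ x ∈ K, x ∉ E) :
    (∑ i ∈ ballots,
        if (ballot i).find? (fun x => decide (x ∉ E)) = some c₁ then w i else 0) =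
      (∑ i ∈ ballots,
        if (ballot' i).find? (fun x => decide (x ∉ E)) = some c₁ then w i else 0) := by
  refine Finset.sum_congr rfl fun i hi => ?_
  rcases hmod i hi with h | ⟨p, k, s, s', hk, hp, hb, hb'⟩
  · rw [h]
  · have hkE : (decide (k ∉ E)) = true := by simp [hE k hk]
    rw [hb, hb', List.find?_append, List.find?_append,
      List.find?_cons_of_pos (p := fun x => decide (x ∉ E)) (l := s) hkE,
      List.find?_cons_of_pos (p := fun x => decide (x ∉ E)) (l := s') hkE]
end

section
/- Monotonicity of bloc benefit: if a set of voters who rank some coalition member first change their ballots only by inserting the remaining coalition members immediately after their existing coalition preferences (preserving relative order of coalition members already ranked, and not changing anything before the first coalition member), then for every coalition member c and every set E of eliminated candidates, c's active vote total under the modified ballots is greater than or equal to c's total under the original ballots. -/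
/-- Monotonicity of bloc benefit: modify each ballot only by inserting
coalition members of `K` after the ballot's last `K`-entry (so the ballot's
prefix containing all its original `K`-entries is unchanged and only members of
`K` are inserted). Then for every coalition member `c ∈ K` and every eliminated
set `E` with `c ∉ E`, the total weight of ballots counting for `c` (i.e. whose
first entry outside `E` is `c`) under the modified ballots is at least the
total under the original ballots. -/
theorem bloc_insertion_weakly_benefits {C : Type*} [DecidableEq C]
    {ι : Type*} (K : Finset C) (ballots : Finset ι) (w : ι → ℝ)
    (hw : ∀ i ∈ ballots, 0 ≤ w i) (ballot ballot' : ι → List C)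
    (hmod : ∀ i ∈ ballots, ∃ b₁ b₂ ins : List C,
      ballot i = b₁ ++ b₂ ∧ ballot' i = b₁ ++ ins ++ b₂ ∧
      (∀ x ∈ ins, x ∈ K) ∧ (∀ x ∈ b₂, x ∉ K))
    (c : C) (hc : c ∈ K) (E : Finset C) (hE : c ∉ E) :
    (∑ i ∈ ballots,
        if (ballot i).find? (fun x => decide (x ∉ E)) = some c then w i else 0) ≤
      (∑ i ∈ ballots,
        if (ballot' i).find? (fun x => decide (x ∉ E)) = some c then w i else 0) := by
  
  apply Finset.sum_le_sum
  intro i hi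
  by_cases h : (ballot i).find? (fun x => decide (x ∉ E)) = some c
  · have h' : (ballot' i).find? (fun x => decide (x ∉ E)) = some c := by
      obtain ⟨b₁, b₂, ins, hb, hb', hins, hb₂⟩ := hmod i hi
      rw [hb, List.find?_append] at h
      rw [hb', List.append_assoc, List.find?_append]
      rcases h₁ : b₁.find? (fun x => decide (x ∉ E)) with _ | a
      · rw [h₁, Option.or] at h
        exact absurd hc (hb₂ c (List.mem_of_find?_eq_some h))
      · simp only [h₁] at h ⊢
        simpa using h
    rw [if_pos h, if_pos h']
  · rw [if_neg h]
    split
    · exact hw i hi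
    · exact le_refl 0
end
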